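/- arXiv:1703.10740 — 5 statements merged into one kernel-verified Lean document; each statement's English description precedes it below -/
import Mathlib

section
/- Let d ≥ 1 and let U, V : (Fin n₁) × ⋯ × (Fin n_d) → ℝ be two rank-one tensors, i.e. U(x) = Π_{i=1}^d a_i(x_i) and V(x) = Π_{i=1}^d b_i(x_i) for some vectors a_i, b_i ∈ ℝ^{n_i}. Fix a base index e = (e₁,…,e_d) and suppose U(e) = V(e) ≠ 0 and that U(x) = V(x) for every index x that differs from e in at most one coordinate. Then U = V. (In particular, a rank-one tensor with a nonzero entry at e is uniquely determined among rank-one tensors by its entries on the coordinate cross through e; this generalizes the paper's motivating example of a 2×2×2 tensor of CP rank 1 sampled at the entries (1,1,1),(2,1,1),(1,2,1),(1,1,2).) -/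
/-- Two rank-one tensors that have the same nonzero entry at a
base index `e` and agree on every index differing from `e` in at most one
coordinate are equal. -/
theorem rank_one_unique_on_cross {d : ℕ} (hd : 1 ≤ d) (n : Fin d → ℕ)
    (U V : (∀ i, Fin (n i)) → ℝ)
    (a b : ∀ i : Fin d, Fin (n i) → ℝ)
    (hU : ∀ x, U x = ∏ i, a i (x i))
    (hV : ∀ x, V x = ∏ i, b i (x i))
    (e : ∀ i, Fin (n i))
    (he : U e = V e) (hne : U e ≠ 0)
    (hcross : ∀ x : ∀ i, Fin (n i),
      (∀ i j : Fin d, x i ≠ e i → x j ≠ e j → i = j) → U x = V x) :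
    U = V := by
  have hPa : (∏ i, a i (e i)) ≠ 0 := by rw [hU] at hne; exact hne
  have hPb : (∏ i, b i (e i)) ≠ 0 := by
    have := he; rw [hU, hV] at this; rw [← this]; exact hPa
  have key : ∀ (c : ∀ i : Fin d, Fin (n i) → ℝ), (∏ i, c i (e i)) ≠ 0 →
      ∀ x : ∀ i, Fin (n i),
      (∏ i, c i (x i)) * (∏ i, c i (e i)) ^ (d - 1) =
        ∏ i, ∏ j, c j (Function.update e i (x i) j) := by
    intro c hc x
    have hci : ∀ i : Fin d, c i (e i) ≠ 0 := fun i =>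
      Finset.prod_ne_zero_iff.mp hc i (Finset.mem_univ i)
    have h1 : ∀ i : Fin d, ∏ j, c j (Function.update e i (x i) j)
        = c i (x i) * ((∏ j, c j (e j)) / c i (e i)) := by
      intro i
      rw [← Finset.prod_erase_mul Finset.univ _ (Finset.mem_univ i)]
      have h2 : ∏ j ∈ Finset.univ.erase i, c j (Function.update e i (x i) j)
          = ∏ j ∈ Finset.univ.erase i, c j (e j) := by
        refine Finset.prod_congr rfl fun j hj => ?_
        rw [Function.update_of_ne (Finset.ne_of_mem_erase hj)]
      rw [h2, Function.update_self]
      have h3 : (∏ j ∈ Finset.univ.erase i, c j (e j)) * c i (e i)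
          = ∏ j, c j (e j) := Finset.prod_erase_mul _ _ (Finset.mem_univ i)
      field_simp [hci i]
      rw [← h3]; ring
    rw [Finset.prod_congr rfl fun i _ => h1 i, Finset.prod_mul_distrib,
      Finset.prod_div_distrib, Finset.prod_const]
    have hd' : (∏ j, c j (e j)) ^ (Finset.univ : Finset (Fin d)).card = (∏ j, c j (e j)) ^ (d - 1) * ∏ j, c j (e j) := by
      rw [Finset.card_univ, Fintype.card_fin, ← pow_succ, Nat.sub_add_cancel hd]
    rw [hd']
    field_simp
  funext x
  have hcr : ∀ i : Fin d, U (Function.update e i (x i)) = V (Function.update e i (x i)) := by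
    intro i
    refine hcross _ fun i' j' h1 h2 => ?_
    have hi' : i' = i := by
      by_contra hne'
      exact h1 (Function.update_of_ne hne' _ _)
    have hj' : j' = i := by
      by_contra hne'
      exact h2 (Function.update_of_ne hne' _ _)
    rw [hi', hj']
  have hUx := key a hPa x
  have hVx := key b hPb x
  have hPeq : (∏ i, b i (e i)) = ∏ i, a i (e i) := by
    have := he; rw [hU, hV] at this; rw [← this]
  rw [hPeq] at hVx
  have hprod : (∏ i, ∏ j, a j (Function.update e i (x i) j))
      = ∏ i, ∏ j, b j (Function.update e i (x i) j) := by
    refine Finset.prod_congr rfl fun i _ => ?_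
    have := hcr i; rwa [hU, hV] at this
  rw [hU, hV]
  have : (∏ i, a i (x i)) * (∏ i, a i (e i)) ^ (d - 1)
      = (∏ i, b i (x i)) * (∏ i, a i (e i)) ^ (d - 1) := by
    rw [hUx, hVx, hprod]
  exact mul_right_cancel₀ (pow_ne_zero _ hPa) this
end

section
/- Let X ∈ ℝ^{n₁ × n₂} be a matrix of rank exactly r, let R : Fin r → Fin n₁ be an injective selection of r rows such that the r × n₂ submatrix X_R of X formed by the rows R has rank r, and let Q ∈ ℝ^{r × r} be an invertible matrix. Then there exists exactly one pair (Y, Z) with Y ∈ ℝ^{n₁ × r} and Z ∈ ℝ^{r × n₂} such that X = Y·Z and the r × r submatrix of Y formed by the rows R equals Q. -/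
/-!
Write `A = X_R` for the selected rows. Since `A` has full row rank it has a right inverse `B`,
and since `rank A = rank X` the rows of `X` lie in the row space of `A`, so `X = C A` and hence
`X = X B A`. Any admissible factorization satisfies `A = Q Z` and `X B = Y Z B = Y Q⁻¹`, which
forces `(Y, Z) = (X B Q, Q⁻¹ A)`; conversely this pair works because `X B A = X`.
-/

namespace Matrix

theorem submatrix_id_mul {α l m n o : Type*} [Fintype n] [Mul α] [AddCommMonoid α]
    (Y : Matrix m n α) (Z : Matrix n o α) (R : l → m) :
    (Y * Z).submatrix R id = Y.submatrix R id * Z :=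
  submatrix_mul Y Z R id id Function.bijective_id

section Field

variable {K : Type*} [Field K] {m m₀ n : Type*} [Fintype m] [Fintype m₀] [Fintype n]

theorem exists_mul_eq_one_of_rank_eq_card_height [DecidableEq m] (A : Matrix m n K)
    (h : A.rank = Fintype.card m) : ∃ B : Matrix n m K, A * B = 1 := by
  rw [← mulVec_surjective_iff_exists_right_inverse, ← coe_mulVecLin, ← LinearMap.range_eq_top]
  exact Submodule.eq_top_of_finrank_eq (by rw [← rank, h, Module.finrank_fintype_fun_eq_card])

theorem span_row_submatrix_eq_of_rank_eq (X : Matrix m n K) (R : m₀ → m)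
    (h : (X.submatrix R id).rank = X.rank) :
    Submodule.span K (Set.range (X.submatrix R id).row) = Submodule.span K (Set.range X.row) := by
  refine Submodule.eq_of_le_of_finrank_eq (Submodule.span_mono ?_) ?_
  · rintro _ ⟨s, rfl⟩
    exact ⟨R s, rfl⟩
  · rw [← rank_eq_finrank_span_row, ← rank_eq_finrank_span_row, h]

theorem exists_eq_mul_submatrix_of_rank_eq (X : Matrix m n K) (R : m₀ → m)
    (h : (X.submatrix R id).rank = X.rank) : ∃ C : Matrix m m₀ K, X = C * X.submatrix R id := by
  have hrow : ∀ i, X i ∈ LinearMap.range (X.submatrix R id).vecMulLinear := fun i => by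
    rw [range_vecMulLinear, span_row_submatrix_eq_of_rank_eq X R h]
    exact Submodule.subset_span ⟨i, rfl⟩
  choose C hC using hrow
  exact ⟨of C, ext fun i j => by rw [mul_apply_eq_vecMul, ← hC i]; rfl⟩

end Field

theorem factorization_eq_of_submatrix_eq {α m m₀ n : Type*} [CommRing α] [Fintype m₀]
    [DecidableEq m₀] [Fintype n] {X : Matrix m n α} {R : m₀ → m} {B : Matrix n m₀ α}
    (hB : X.submatrix R id * B = 1) {Q : Matrix m₀ m₀ α} (hQ : IsUnit Q.det)
    {Y : Matrix m m₀ α} {Z : Matrix m₀ n α} (hX : X = Y * Z) (hY : Y.submatrix R id = Q) :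
    Y = X * B * Q ∧ Z = Q⁻¹ * X.submatrix R id := by
  have hA : X.submatrix R id = Q * Z := by rw [hX, submatrix_id_mul, hY]
  have hZ : Z = Q⁻¹ * X.submatrix R id := by rw [hA, nonsing_inv_mul_cancel_left Q _ hQ]
  refine ⟨?_, hZ⟩
  calc Y = Y * Q⁻¹ * (X.submatrix R id * B) * Q := by
        rw [hB, Matrix.mul_one, nonsing_inv_mul_cancel_right Q _ hQ]
    _ = Y * Z * B * Q := by rw [hZ]; simp only [Matrix.mul_assoc]
    _ = X * B * Q := by rw [← hX]

end Matrix

open Matrix in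
theorem unique_rank_factorization_with_prescribed_submatrix_general {n₁ n₂ r : ℕ}
    (X : Matrix (Fin n₁) (Fin n₂) ℝ) (hX : X.rank = r)
    (R : Fin r → Fin n₁)
    (hXR : (X.submatrix R id).rank = r)
    (Q : Matrix (Fin r) (Fin r) ℝ) (hQ : IsUnit Q.det) :
    ∃! YZ : Matrix (Fin n₁) (Fin r) ℝ × Matrix (Fin r) (Fin n₂) ℝ,
      X = YZ.1 * YZ.2 ∧ YZ.1.submatrix R id = Q := by
  set A := X.submatrix R id
  obtain ⟨B, hB⟩ := exists_mul_eq_one_of_rank_eq_card_height A (by rw [hXR, Fintype.card_fin])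
  obtain ⟨C, hC⟩ := exists_eq_mul_submatrix_of_rank_eq X R (hXR.trans hX.symm)
  have hXB : X * B * A = X :=
    calc X * B * A = C * (A * B) * A := by rw [← Matrix.mul_assoc C, ← hC]
      _ = X := by rw [hB, Matrix.mul_one, ← hC]
  refine ⟨(X * B * Q, Q⁻¹ * A), ⟨?_, ?_⟩, ?_⟩
  · rw [Matrix.mul_assoc, mul_nonsing_inv_cancel_left Q _ hQ, hXB]
  · rw [submatrix_id_mul, submatrix_id_mul, hB, Matrix.one_mul]
  · rintro ⟨Y, Z⟩ ⟨hYZ, hY⟩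
    obtain ⟨rfl, rfl⟩ := factorization_eq_of_submatrix_eq hB hQ hYZ hY
    rfl

/-- A rank-`r` matrix `X` whose rows selected by an injection
`R` form a full-rank `r × n₂` submatrix admits exactly one factorization
`X = Y * Z` with the `R`-rows of `Y` equal to a prescribed invertible matrix
`Q`. -/
theorem unique_rank_factorization_with_prescribed_submatrix {n₁ n₂ r : ℕ}
    (X : Matrix (Fin n₁) (Fin n₂) ℝ) (hX : X.rank = r)
    (R : Fin r → Fin n₁) (hR : Function.Injective R)
    (hXR : (X.submatrix R id).rank = r)
    (Q : Matrix (Fin r) (Fin r) ℝ) (hQ : IsUnit Q.det) :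
    ∃! YZ : Matrix (Fin n₁) (Fin r) ℝ × Matrix (Fin r) (Fin n₂) ℝ,
      X = YZ.1 * YZ.2 ∧ YZ.1.submatrix R id = Q :=
  unique_rank_factorization_with_prescribed_submatrix_general X hX R hXR Q hQ
end

section
/- Let R, C, F be finite sets, f : R → F a map, r′ a nonnegative integer, and A : R × C → {0,1} a binary matrix such that every column of A has at least r′ + 1 nonzero entries, and such that for every nonempty subset S ⊆ C one has m_f(A, S) ≥ |S| + r′. Then there exists a binary matrix B : R × C → {0,1} with B(ρ,c) = 1 implying A(ρ,c) = 1, such that every column of B has exactly r′ + 1 nonzero entries, and for every nonempty subset S ⊆ C one has m_f(B, S) ≥ |S| + r′. -/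
/-!
Sparsify one entry at a time. Call a set of columns *tight* if it meets the Hall bound with
equality; by submodularity of `S ↦ m_f(S)`, the tight sets containing a fixed column `c₀` are
closed under intersection. If `c₀` has at least `r' + 2` ones and deleting any one of them, say
`ρ`, breaks the bound, the violating set is tight, contains `c₀`, and `ρ` is the only row of its
union with value `f ρ`. Intersecting these sets over all `ρ` gives a tight set `T ∋ c₀` in which
the rows of `c₀` contribute `|supp c₀| ≥ r' + 2` private values, so
`m_f(T) ≥ r' + 2 + (|T| - 1)`, contradicting tightness.
-/

open Finset Function

section Sparsification

variable {R C F : Type*} [DecidableEq R] [DecidableEq F]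

-- A pattern is encoded by its column supports `s : C → Finset R`; `m_f(S)` is the card of this.
def coveredValues (f : R → F) (s : C → Finset R) (S : Finset C) : Finset F :=
  (S.biUnion s).image f

def IsHall (f : R → F) (r' : ℕ) (s : C → Finset R) : Prop :=
  ∀ S : Finset C, S.Nonempty → S.card + r' ≤ (coveredValues f s S).card

def IsTight (f : R → F) (r' : ℕ) (s : C → Finset R) (S : Finset C) : Prop :=
  (coveredValues f s S).card ≤ S.card + r'

variable {f : R → F} {r' : ℕ} {s : C → Finset R} {S T : Finset C} {c₀ : C}

lemma coveredValues_mono (h : S ⊆ T) : coveredValues f s S ⊆ coveredValues f s T :=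
  image_subset_image (biUnion_subset_biUnion_of_subset_left _ h)

theorem IsHall.card_le_card_coveredValues (h : IsHall f r' s) (S : Finset C) :
    S.card ≤ (coveredValues f s S).card := by
  rcases S.eq_empty_or_nonempty with rfl | hS
  · simp
  · exact (Nat.le_add_right _ _).trans (h S hS)

variable [DecidableEq C]

lemma coveredValues_union :
    coveredValues f s (S ∪ T) = coveredValues f s S ∪ coveredValues f s T := by
  simp only [coveredValues, union_biUnion, image_union]

lemma card_coveredValues_union_add_inter_le :
    (coveredValues f s (S ∪ T)).card + (coveredValues f s (S ∩ T)).card ≤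
      (coveredValues f s S).card + (coveredValues f s T).card := by
  rw [coveredValues_union, ← card_union_add_card_inter (coveredValues f s S)]
  have := card_le_card <| subset_inter
    (coveredValues_mono (f := f) (s := s) (inter_subset_left : S ∩ T ⊆ S))
    (coveredValues_mono inter_subset_right)
  omega

lemma biUnion_update_of_mem (t : Finset R) (h : c₀ ∈ S) :
    S.biUnion (update s c₀ t) = t ∪ (S.erase c₀).biUnion s := by
  conv_lhs => rw [← insert_erase h]
  rw [biUnion_insert, update_self]
  congr 1
  exact biUnion_congr rfl fun c hc => update_of_ne (ne_of_mem_erase hc) _ _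

lemma biUnion_update_of_notMem (t : Finset R) (h : c₀ ∉ S) :
    S.biUnion (update s c₀ t) = S.biUnion s :=
  biUnion_congr rfl fun _ hc => update_of_ne (ne_of_mem_of_not_mem hc h) _ _

lemma coveredValues_subset_insert_update_erase (ρ : R) :
    coveredValues f s S ⊆
      insert (f ρ) (coveredValues f (update s c₀ ((s c₀).erase ρ)) S) := by
  simp only [coveredValues]
  rw [← image_insert]
  refine image_subset_image ?_
  by_cases h : c₀ ∈ S
  · conv_lhs => rw [← insert_erase h, biUnion_insert]
    rw [biUnion_update_of_mem _ h, ← insert_union]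
    exact union_subset_union (insert_erase_subset ρ _) subset_rfl
  · rw [biUnion_update_of_notMem _ h]
    exact subset_insert _ _

-- `hpriv` makes `f` injective on column `c₀`, with values met by no other column of `T`.
lemma card_coveredValues_eq_of_private (hc₀ : c₀ ∈ T)
    (hpriv : ∀ ρ ∈ s c₀, f ρ ∉ coveredValues f (update s c₀ ((s c₀).erase ρ)) T) :
    (coveredValues f s T).card = (s c₀).card + (coveredValues f s (T.erase c₀)).card := by
  have hmem : ∀ ρ ∈ s c₀, ∀ ρ' ∈ (s c₀).erase ρ ∪ (T.erase c₀).biUnion s, f ρ' ≠ f ρ := by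
    intro ρ hρ ρ' hρ' hf
    refine hpriv ρ hρ (mem_image.2 ⟨ρ', ?_, hf⟩)
    rwa [biUnion_update_of_mem _ hc₀]
  have hinj : Set.InjOn f (s c₀) := fun ρ₁ h₁ ρ₂ h₂ hf => by
    by_contra hne
    exact hmem ρ₂ h₂ ρ₁ (mem_union_left _ (mem_erase.2 ⟨hne, h₁⟩)) hf
  have hdisj : Disjoint ((s c₀).image f) (((T.erase c₀).biUnion s).image f) := by
    simp only [disjoint_left, mem_image, not_exists, not_and]
    rintro _ ⟨ρ, hρ, rfl⟩ ρ' hρ'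
    exact hmem ρ hρ ρ' (mem_union_right _ hρ')
  change ((T.biUnion s).image f).card = _
  conv_lhs => rw [← insert_erase hc₀, biUnion_insert]
  rw [image_union, card_union_of_disjoint hdisj, card_image_of_injOn hinj]
  rfl

namespace IsHall

lemma isTight_inter (h : IsHall f r' s) (hS : S.Nonempty) (hStight : IsTight f r' s S)
    (hTtight : IsTight f r' s T) : IsTight f r' s (S ∩ T) := by
  unfold IsTight at *
  have hsub := card_coveredValues_union_add_inter_le (f := f) (s := s) (S := S) (T := T)
  have hunion := h (S ∪ T) (hS.mono subset_union_left)
  have := card_union_add_card_inter S T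
  omega

lemma of_update_erase_violation (h : IsHall f r' s) {ρ : R} (hS : S.Nonempty)
    (hviol : (coveredValues f (update s c₀ ((s c₀).erase ρ)) S).card < S.card + r') :
    c₀ ∈ S ∧ IsTight f r' s S ∧ f ρ ∉ coveredValues f (update s c₀ ((s c₀).erase ρ)) S := by
  have hHall := h S hS
  have hsub := coveredValues_subset_insert_update_erase (f := f) (s := s) (S := S) (c₀ := c₀) ρ
  refine ⟨?_, ?_, fun hρ => ?_⟩
  · by_contra hc₀
    rw [coveredValues, biUnion_update_of_notMem _ hc₀] at hviol
    exact absurd hHall (not_le.2 hviol)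
  · have := (card_le_card hsub).trans (card_insert_le _ _)
    unfold IsTight
    omega
  · rw [insert_eq_of_mem hρ] at hsub
    have := card_le_card hsub
    omega

lemma exists_update_erase (h : IsHall f r' s) (hc₀ : r' + 2 ≤ (s c₀).card) :
    ∃ ρ ∈ s c₀, IsHall f r' (update s c₀ ((s c₀).erase ρ)) := by
  by_contra! hfail
  simp only [IsHall, not_forall, not_le] at hfail
  choose! W hWne hWviol using hfail
  have hne : (s c₀).Nonempty := card_pos.1 (by omega)
  set T := (s c₀).inf' hne W
  have hT : c₀ ∈ T ∧ IsTight f r' s T := by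
    refine inf'_induction hne W (p := fun X => c₀ ∈ X ∧ IsTight f r' s X) ?_ fun ρ hρ =>
      (h.of_update_erase_violation (hWne ρ hρ) (hWviol ρ hρ)).imp_right And.left
    rintro X ⟨hX, hXtight⟩ Y ⟨hY, hYtight⟩
    exact ⟨mem_inter.2 ⟨hX, hY⟩, h.isTight_inter ⟨c₀, hX⟩ hXtight hYtight⟩
  have hpriv : ∀ ρ ∈ s c₀, f ρ ∉ coveredValues f (update s c₀ ((s c₀).erase ρ)) T :=
    fun ρ hρ hmem => (h.of_update_erase_violation (hWne ρ hρ) (hWviol ρ hρ)).2.2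
      (coveredValues_mono (inf'_le W hρ) hmem)
  have hcount := card_coveredValues_eq_of_private hT.1 hpriv
  have hrest := h.card_le_card_coveredValues (T.erase c₀)
  have := card_erase_add_one hT.1
  unfold IsTight at hT
  omega

theorem exists_le_card_eq [Finite C] (hcol : ∀ c, r' + 1 ≤ (s c).card) (h : IsHall f r' s) :
    ∃ t ≤ s, (∀ c, (t c).card = r' + 1) ∧ IsHall f r' t := by
  induction s using WellFoundedLT.induction with
  | ind s ih =>
    by_cases hall : ∀ c, (s c).card = r' + 1
    · exact ⟨s, le_rfl, hall, h⟩
    obtain ⟨c₀, hc₀⟩ := not_forall.1 hall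
    obtain ⟨ρ, hρ, h'⟩ := h.exists_update_erase (c₀ := c₀) (by have := hcol c₀; omega)
    have hlt : update s c₀ ((s c₀).erase ρ) < s := update_lt_self_iff.2 (erase_ssubset hρ)
    have hcol' : ∀ c, r' + 1 ≤ (update s c₀ ((s c₀).erase ρ) c).card := by
      intro c
      rcases eq_or_ne c c₀ with rfl | hc
      · rw [update_self, card_erase_of_mem hρ]; have := hcol c; omega
      · rw [update_of_ne hc]; exact hcol c
    obtain ⟨t, hts, ht⟩ := ih _ hlt hcol' h'
    exact ⟨t, hts.trans hlt.le, ht⟩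

end IsHall

end Sparsification

open Finset in
theorem exists_sparsified_pattern_general {R C F : Type*}
    [Fintype R] [Fintype C] [DecidableEq F]
    (f : R → F) (r' : ℕ) (A : R → C → Bool)
    (hcol : ∀ c : C, r' + 1 ≤ (univ.filter fun ρ => A ρ c).card)
    (hHall : ∀ S : Finset C, S.Nonempty →
      S.card + r' ≤ ((univ.filter fun ρ => ∃ c ∈ S, A ρ c).image f).card) :
    ∃ B : R → C → Bool,
      (∀ ρ c, B ρ c → A ρ c) ∧
      (∀ c : C, (univ.filter fun ρ => B ρ c).card = r' + 1) ∧
      (∀ S : Finset C, S.Nonempty →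
        S.card + r' ≤ ((univ.filter fun ρ => ∃ c ∈ S, B ρ c).image f).card) := by
  classical
  have hfilter : ∀ (B : R → C → Bool) (S : Finset C), (univ.filter fun ρ => ∃ c ∈ S, B ρ c) =
      S.biUnion fun c => univ.filter fun ρ => B ρ c := by
    intro B S; ext ρ; simp
  obtain ⟨t, hts, htcard, htHall⟩ := IsHall.exists_le_card_eq (f := f) hcol
    fun S hS => by simpa only [coveredValues, ← hfilter] using hHall S hS
  have hsupp : (fun c => univ.filter fun ρ => decide (ρ ∈ t c) = true) = t := by
    funext c; ext; simp
  refine ⟨fun ρ c => decide (ρ ∈ t c), fun ρ c hB => ?_, fun c => ?_, fun S hS => ?_⟩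
  · simpa using hts c (of_decide_eq_true hB)
  · simpa using htcard c
  · rw [hfilter, hsupp]
    exact htHall S hS

open Finset in
/-- (Deterministic sparsification.) If every column of the
binary matrix `A` has at least `r' + 1` ones and every nonempty set `S` of
columns satisfies the Hall-type bound `m_f(A, S) ≥ |S| + r'`, then one can
choose a binary matrix `B ≤ A` whose columns have exactly `r' + 1` ones and
which still satisfies the Hall-type bound. -/
theorem exists_sparsified_pattern {R C F : Type*}
    [Fintype R] [Fintype C] [Fintype F] [DecidableEq F]
    (f : R → F) (r' : ℕ) (A : R → C → Bool)
    (hcol : ∀ c : C, r' + 1 ≤ (univ.filter fun ρ => A ρ c).card)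
    (hHall : ∀ S : Finset C, S.Nonempty →
      S.card + r' ≤ ((univ.filter fun ρ => ∃ c ∈ S, A ρ c).image f).card) :
    ∃ B : R → C → Bool,
      (∀ ρ c, B ρ c → A ρ c) ∧
      (∀ c : C, (univ.filter fun ρ => B ρ c).card = r' + 1) ∧
      (∀ S : Finset C, S.Nonempty →
        S.card + r' ≤ ((univ.filter fun ρ => ∃ c ∈ S, B ρ c).image f).card) :=
  exists_sparsified_pattern_general f r' A hcol hHall
end

section
/- Let R and F be finite sets, f : R → F a map, r′ a nonnegative integer, and r ≥ 1. Let C₁,…,C_r be pairwise disjoint finite column sets and let A be a binary matrix with rows R and columns C₁ ∪ ⋯ ∪ C_r such that for each l ∈ {1,…,r} and every nonempty subset S ⊆ C_l one has m_f(A, S) ≥ |S| + r′. Then for every nonempty subset S ⊆ C₁ ∪ ⋯ ∪ C_r one has r·(m_f(A, S) − r′) ≥ |S|. -/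
open Finset in
/-- (Aggregation over `r` disjoint blocks of columns.) If
each of `r` pairwise disjoint blocks `C l` of columns satisfies the Hall-type
bound `m_f(A, S) ≥ |S| + r'` for every nonempty `S ⊆ C l`, then every nonempty
set `S` of columns contained in the union of the blocks satisfies
`r * (m_f(A, S) − r') ≥ |S|`. -/
theorem aggregated_hall_bound {Rw Col F : Type*}
    [Fintype Rw] [Fintype Col] [Fintype F] [DecidableEq Col] [DecidableEq F]
    (f : Rw → F) (r' r : ℕ) (hr : 1 ≤ r)
    (C : Fin r → Finset Col)
    (hdisj : ∀ l l' : Fin r, l ≠ l' → Disjoint (C l) (C l'))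
    (A : Rw → Col → Bool)
    (hblock : ∀ l : Fin r, ∀ S ⊆ C l, S.Nonempty →
      S.card + r' ≤ ((univ.filter fun ρ => ∃ c ∈ S, A ρ c).image f).card)
    (S : Finset Col) (hS : S.Nonempty) (hSsub : S ⊆ univ.biUnion C) :
    S.card ≤ r * (((univ.filter fun ρ => ∃ c ∈ S, A ρ c).image f).card - r') := by
  set m := ((univ.filter fun ρ => ∃ c ∈ S, A ρ c).image f).card with hm
  -- monotonicity of m over subsets of S
  have hmono : ∀ T ⊆ S,
      ((univ.filter fun ρ => ∃ c ∈ T, A ρ c).image f).card ≤ m := by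
    intro T hT
    apply Finset.card_le_card
    apply Finset.image_subset_image
    intro ρ hρ
    simp only [Finset.mem_filter, Finset.mem_univ, true_and] at hρ ⊢
    obtain ⟨c, hc, hA⟩ := hρ
    exact ⟨c, hT hc, hA⟩
  -- each block piece bound
  have hpiece : ∀ l : Fin r, (S ∩ C l).card ≤ m - r' := by
    intro l
    rcases (S ∩ C l).eq_empty_or_nonempty with h | h
    · simp [h]
    · have h1 := hblock l (S ∩ C l) (Finset.inter_subset_right) h
      have h2 := hmono (S ∩ C l) (Finset.inter_subset_left)
      omega
  -- decompose S
  have hdecomp : S = univ.biUnion (fun l => S ∩ C l) := by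
    ext c
    simp only [Finset.mem_biUnion, Finset.mem_inter, Finset.mem_univ, true_and]
    constructor
    · intro hc
      obtain ⟨l, -, hl⟩ := Finset.mem_biUnion.1 (hSsub hc)
      exact ⟨l, hc, hl⟩
    · rintro ⟨l, hc, -⟩; exact hc
  have hcard : S.card = ∑ l : Fin r, (S ∩ C l).card := by
    conv_lhs => rw [hdecomp]
    rw [Finset.card_biUnion]
    intro l _ l' _ hll'
    exact Finset.disjoint_left.2 fun c hc hc' =>
      (Finset.disjoint_left.1 (hdisj l l' hll')) (Finset.mem_inter.1 hc).2
        (Finset.mem_inter.1 hc').2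
  calc S.card = ∑ l : Fin r, (S ∩ C l).card := hcard
    _ ≤ ∑ _l : Fin r, (m - r') := Finset.sum_le_sum fun l _ => hpiece l
    _ = r * (m - r') := by simp [Finset.sum_const, mul_comm]
end

section
/- Let d ≥ 3, r ≥ 1, r′ ≥ 0 be integers, R a finite set of rows, and f₁,…,f_{d−2} : R → F maps to a finite set F. Let C₁,…,C_{d−2} be pairwise disjoint finite column sets and A a binary matrix with rows R and columns C₁ ∪ ⋯ ∪ C_{d−2}. Assume: (a) for each l ∈ {1,…,d−3} and every nonempty S ⊆ C_l, r·(m_{f_l}(A, S) − 1) ≥ |S|; (b) for every nonempty S ⊆ C_{d−2}, r·(m_{f_{d−2}}(A, S) − r) ≥ |S|; (c) for each l ∈ {1,…,d−3}, the support of every column in C_l contains rows attaining at least r distinct values of f_{d−2}; (d) every column of A has nonempty support. Then for every nonempty subset S of C₁ ∪ ⋯ ∪ C_{d−2}, r·( (Σ_{i=1}^{d−2} m_{f_i}(A, S)) − min{ max_{1≤i≤d−2} m_{f_i}(A, S), r } − (d−3) ) ≥ |S|. -/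
open Finset in
/-- (Deterministic combinatorial core of the
finite-completability theorem.) Given `d − 2` pairwise disjoint blocks of
columns, the first `d − 3` of which satisfy the Hall-type bound with offset `1`
and the last of which satisfies it with offset `r`, such that each column of a
non-last block meets at least `r` distinct values of `f_last` and every column
has nonempty support, every nonempty set `S` of columns in the union satisfies
`r * ((Σ_i m_{f_i}(A,S)) − min{max_i m_{f_i}(A,S), r} − (d−3)) ≥ |S|`. -/
theorem finite_completability_counting {Rw Col F : Type*}
    [Fintype Rw] [Fintype Col] [Fintype F] [DecidableEq Col] [DecidableEq F]
    {d r r' : ℕ} (hd : 3 ≤ d) (hr : 1 ≤ r)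
    (f : Fin (d - 2) → Rw → F)
    (C : Fin (d - 2) → Finset Col)
    (hdisj : ∀ l l' : Fin (d - 2), l ≠ l' → Disjoint (C l) (C l'))
    (A : Rw → Col → Bool)
    (last : Fin (d - 2)) (hlast : (last : ℕ) = d - 3)
    (ha : ∀ l : Fin (d - 2), l ≠ last → ∀ S ⊆ C l, S.Nonempty →
      S.card ≤ r * (((univ.filter fun ρ => ∃ c ∈ S, A ρ c).image (f l)).card - 1))
    (hb : ∀ S ⊆ C last, S.Nonempty →
      S.card ≤ r * (((univ.filter fun ρ => ∃ c ∈ S, A ρ c).image (f last)).card - r))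
    (hc : ∀ l : Fin (d - 2), l ≠ last → ∀ c ∈ C l,
      r ≤ ((univ.filter fun ρ => A ρ c).image (f last)).card)
    (hsupp : ∀ c ∈ univ.biUnion C, ∃ ρ : Rw, A ρ c)
    (S : Finset Col) (hS : S.Nonempty) (hSsub : S ⊆ univ.biUnion C) :
    S.card ≤ r *
      ((∑ i : Fin (d - 2),
          ((univ.filter fun ρ => ∃ c ∈ S, A ρ c).image (f i)).card)
        - min (univ.sup fun i : Fin (d - 2) =>
            ((univ.filter fun ρ => ∃ c ∈ S, A ρ c).image (f i)).card) r
        - (d - 3)) := by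

  classical
  set M : Fin (d - 2) → ℕ :=
    fun i => ((univ.filter fun ρ => ∃ c ∈ S, A ρ c).image (f i)).card with hM
  set T : Fin (d - 2) → Finset Col := fun l => S ∩ C l with hT
  -- every M i is at least 1
  have hM1 : ∀ i, 1 ≤ M i := by
    intro i
    obtain ⟨c, hcS⟩ := hS
    obtain ⟨ρ, hρ⟩ := hsupp c (hSsub hcS)
    have hmem : f i ρ ∈ (univ.filter fun ρ => ∃ c ∈ S, A ρ c).image (f i) := by
      apply mem_image_of_mem
      simp only [mem_filter, mem_univ, true_and]
      exact ⟨c, hcS, hρ⟩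
    exact card_pos.mpr ⟨_, hmem⟩
  -- monotonicity of m under taking sub-blocks
  have hmono : ∀ (l i : Fin (d - 2)),
      ((univ.filter fun ρ => ∃ c ∈ T l, A ρ c).image (f i)).card ≤ M i := by
    intro l i
    apply card_le_card
    apply image_subset_image
    intro ρ hρ
    simp only [mem_filter, mem_univ, true_and] at hρ ⊢
    obtain ⟨c, hcT, hA⟩ := hρ
    exact ⟨c, (mem_inter.mp hcT).1, hA⟩
  -- a single column in S gives a lower bound on M last
  have hsingle : ∀ c ∈ S,
      ((univ.filter fun ρ => A ρ c).image (f last)).card ≤ M last := by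
    intro c hcS
    apply card_le_card
    apply image_subset_image
    intro ρ hρ
    simp only [mem_filter, mem_univ, true_and] at hρ ⊢
    exact ⟨c, hcS, hρ⟩
  -- r ≤ M last
  have hMlast : r ≤ M last := by
    by_cases hne : (T last).Nonempty
    · have hbd := hb (T last) inter_subset_right hne
      have hpos : 0 < (T last).card := card_pos.mpr hne
      set m := ((univ.filter fun ρ => ∃ c ∈ T last, A ρ c).image (f last)).card with hm
      have h0 : m - r ≠ 0 := by
        intro h'
        rw [h'] at hbd
        omega
      have : r ≤ m := by omega
      exact this.trans (hmono last last)
    · obtain ⟨c, hcS⟩ := hS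
      obtain ⟨l, -, hcl⟩ := mem_biUnion.mp (hSsub hcS)
      have hne' : l ≠ last := by
        intro h
        subst h
        exact hne ⟨c, mem_inter.mpr ⟨hcS, hcl⟩⟩
      exact (hc l hne' c hcl).trans (hsingle c hcS)
  -- per-block bound
  have hbound : ∀ l, (T l).card + (if l = last then r * r else r) ≤ r * M l := by
    intro l
    by_cases hl : l = last
    · subst hl
      rw [if_pos rfl]
      by_cases hne : (T l).Nonempty
      · have hbd := hb (T l) inter_subset_right hne
        calc (T l).card + r * r
            ≤ r * (((univ.filter fun ρ => ∃ c ∈ T l, A ρ c).image (f l)).card - r)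
              + r * r := by
              exact Nat.add_le_add_right hbd _
          _ ≤ r * (M l - r) + r * r := by
              apply Nat.add_le_add_right
              exact Nat.mul_le_mul_left _ (Nat.sub_le_sub_right (hmono l l) r)
          _ = r * ((M l - r) + r) := (Nat.mul_add r _ _).symm
          _ = r * M l := by rw [Nat.sub_add_cancel hMlast]
      · have : (T l).card = 0 := card_eq_zero.mpr (not_nonempty_iff_eq_empty.mp hne)
        rw [this, Nat.zero_add]
        exact Nat.mul_le_mul_left r hMlast
    · rw [if_neg hl]
      by_cases hne : (T l).Nonempty
      · have hbd := ha l hl (T l) inter_subset_right hne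
        calc (T l).card + r
            ≤ r * (((univ.filter fun ρ => ∃ c ∈ T l, A ρ c).image (f l)).card - 1)
              + r := by exact Nat.add_le_add_right hbd _
          _ ≤ r * (M l - 1) + r := by
              apply Nat.add_le_add_right
              exact Nat.mul_le_mul_left _ (Nat.sub_le_sub_right (hmono l l) 1)
          _ = r * ((M l - 1) + 1) := by rw [Nat.mul_add, Nat.mul_one]
          _ = r * M l := by rw [Nat.sub_add_cancel (hM1 l)]
      · have : (T l).card = 0 := card_eq_zero.mpr (not_nonempty_iff_eq_empty.mp hne)
        rw [this, Nat.zero_add]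
        calc r = r * 1 := (Nat.mul_one r).symm
          _ ≤ r * M l := Nat.mul_le_mul_left r (hM1 l)
  -- S is partitioned by the blocks
  have hScard : S.card = ∑ l, (T l).card := by
    have hSeq : S = univ.biUnion T := by
      ext c
      simp only [mem_biUnion, mem_univ, true_and]
      constructor
      · intro hcS
        obtain ⟨l, -, hcl⟩ := mem_biUnion.mp (hSsub hcS)
        exact ⟨l, mem_inter.mpr ⟨hcS, hcl⟩⟩
      · rintro ⟨l, hcl⟩
        exact (mem_inter.mp hcl).1
    rw [hSeq, card_biUnion]
    intro l _ l' _ hll'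
    exact ((hdisj l l' hll').mono inter_subset_right inter_subset_right)
  -- the number of non-last blocks is d - 3
  have herase : (univ.erase last).card = d - 3 := by
    rw [card_erase_of_mem (mem_univ last), card_univ, Fintype.card_fin]
    omega
  -- sum of the weights
  have hw : (∑ l : Fin (d - 2), if l = last then r * r else r) = r * r + (d - 3) * r := by
    rw [← Finset.add_sum_erase univ _ (mem_univ last), if_pos rfl]
    congr 1
    rw [Finset.sum_congr rfl (fun x hx => if_neg (Finset.ne_of_mem_erase hx)),
      Finset.sum_const, herase, smul_eq_mul]
  -- the key inequality
  have key : S.card + (r * r + (d - 3) * r) ≤ r * ∑ i, M i := by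
    have h1 : ∑ l, ((T l).card + (if l = last then r * r else r)) ≤ ∑ l, r * M l :=
      Finset.sum_le_sum fun l _ => hbound l
    rw [Finset.sum_add_distrib, hw, ← Finset.mul_sum] at h1
    rw [hScard]
    exact h1
  -- lower bound on the sum of the M i
  have hsum : r + (d - 3) ≤ ∑ i, M i := by
    rw [← Finset.add_sum_erase univ _ (mem_univ last)]
    apply Nat.add_le_add hMlast
    calc d - 3 = (univ.erase last).card * 1 := by rw [herase, Nat.mul_one]
      _ = ∑ _l ∈ univ.erase last, 1 := by rw [Finset.sum_const, smul_eq_mul]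
      _ ≤ ∑ l ∈ univ.erase last, M l := Finset.sum_le_sum fun l _ => hM1 l
  -- finish
  have hu : min (univ.sup fun i : Fin (d - 2) => M i) r ≤ r := min_le_right _ _
  have h2 : ((∑ i, M i) - (r + (d - 3))) + (r + (d - 3)) = ∑ i, M i :=
    Nat.sub_add_cancel hsum
  have h3 : S.card ≤ r * ((∑ i, M i) - (r + (d - 3))) := by
    have h4 : r * ((∑ i, M i) - (r + (d - 3))) + r * (r + (d - 3)) = r * ∑ i, M i := by
      rw [← Nat.mul_add, h2]
    have h5 : r * (r + (d - 3)) = r * r + (d - 3) * r := by ring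
    omega
  calc S.card ≤ r * ((∑ i, M i) - (r + (d - 3))) := h3
    _ ≤ r * ((∑ i, M i) - ((min (univ.sup fun i : Fin (d - 2) => M i) r) + (d - 3))) := by
        apply Nat.mul_le_mul_left
        apply Nat.sub_le_sub_left
        exact Nat.add_le_add_right hu _
    _ = r * ((∑ i, M i) - (min (univ.sup fun i : Fin (d - 2) => M i) r) - (d - 3)) := by
        rw [Nat.sub_sub]
end
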